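/- arXiv:1505.00250 — 2 statements merged into one kernel-verified Lean document; each statement's English description precedes it below -/
import Mathlib

section
/- For every integer k ≥ 0, p(2k+1, 2) = C(k+2, 2), where C(a,b) denotes the binomial coefficient a choose b. -/
/-!
Replacing one copy of the smallest part `a` of a partition of `n` with difference at most `t` by
`a + t` gives a partition of `n + t` with difference at most `t` whose largest part is `a + t > t`;
replacing a copy of the largest part `c > t` by `c - t` undoes this. The partitions of `n + t` with
difference at most `t` that are missed are those with all parts `≤ t`, so
`p(n + t, t) = p(n, t) + #{partitions of n + t into parts ≤ t}`. For `t = 2` a partition into ones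
and twos is determined by its number of twos, so `p(n + 2, 2) = p(n, 2) + ⌊n / 2⌋ + 2`, and starting
from `p(1, 2) = 1` this gives `p(2k + 1, 2) = 1 + 2 + ⋯ + (k + 1) = C(k + 2, 2)`.
-/

/-- `p n t` is the number of (non-empty) partitions of `n` whose difference between
largest and smallest part is at most `t`. -/
noncomputable def boundedDiffCount (n t : ℕ) : ℕ :=
  Nat.card { P : n.Partition // P.parts ≠ 0 ∧ ∀ a ∈ P.parts, ∀ b ∈ P.parts, a ≤ b + t }

open Finset

namespace Nat.Partition

variable {n : ℕ}

def replacePart {m : ℕ} (P : n.Partition) (a b : ℕ) (ha : a ∈ P.parts) (hb : 0 < b)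
    (h : n + b = m + a) : m.Partition where
  parts := b ::ₘ P.parts.erase a
  parts_pos hi := by
    rcases Multiset.mem_cons.1 hi with rfl | hi
    exacts [hb, P.parts_pos (Multiset.mem_of_mem_erase hi)]
  parts_sum := by
    have := Multiset.sum_erase ha
    rw [P.parts_sum] at this
    rw [Multiset.sum_cons]
    omega

@[simp]
theorem replacePart_parts {m : ℕ} (P : n.Partition) (a b : ℕ) (ha : a ∈ P.parts) (hb : 0 < b)
    (h : n + b = m + a) : (P.replacePart a b ha hb h).parts = b ::ₘ P.parts.erase a :=
  rfl

theorem mem_replacePart_parts {m i : ℕ} {P : n.Partition} {a b : ℕ} {ha : a ∈ P.parts}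
    {hb : 0 < b} {h : n + b = m + a} (hi : i ∈ (P.replacePart a b ha hb h).parts) :
    i = b ∨ i ∈ P.parts :=
  (Multiset.mem_cons.1 hi).imp_right Multiset.mem_of_mem_erase

noncomputable def smallestPart (P : n.Partition) : ℕ := sInf {i | i ∈ P.parts}

noncomputable def largestPart (P : n.Partition) : ℕ := sSup {i | i ∈ P.parts}

theorem smallestPart_mem {P : n.Partition} (h : P.parts ≠ 0) : P.smallestPart ∈ P.parts :=
  Nat.sInf_mem (Multiset.exists_mem_of_ne_zero h)

theorem smallestPart_le {P : n.Partition} {i : ℕ} (hi : i ∈ P.parts) : P.smallestPart ≤ i :=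
  Nat.sInf_le hi

theorem smallestPart_eq {P : n.Partition} {a : ℕ} (ha : a ∈ P.parts)
    (h : ∀ i ∈ P.parts, a ≤ i) : P.smallestPart = a :=
  IsLeast.csInf_eq ⟨ha, h⟩

theorem bddAbove_parts (P : n.Partition) : BddAbove {i | i ∈ P.parts} :=
  ⟨n, fun _ => le_of_mem_parts⟩

theorem largestPart_mem {P : n.Partition} (h : P.parts ≠ 0) : P.largestPart ∈ P.parts :=
  Nat.sSup_mem (Multiset.exists_mem_of_ne_zero h) P.bddAbove_parts

theorem le_largestPart {P : n.Partition} {i : ℕ} (hi : i ∈ P.parts) : i ≤ P.largestPart :=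
  le_csSup P.bddAbove_parts hi

theorem largestPart_eq {P : n.Partition} {c : ℕ} (hc : c ∈ P.parts)
    (h : ∀ i ∈ P.parts, i ≤ c) : P.largestPart = c :=
  IsGreatest.csSup_eq ⟨hc, h⟩

theorem smallestPart_replacePart {m : ℕ} {P : n.Partition} {a b : ℕ} {ha : a ∈ P.parts}
    {hb : 0 < b} {h : n + b = m + a} (hmin : ∀ i ∈ P.parts, b ≤ i) :
    (P.replacePart a b ha hb h).smallestPart = b :=
  smallestPart_eq (Multiset.mem_cons_self _ _) fun _ hi =>
    (mem_replacePart_parts hi).elim ge_of_eq (hmin _)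

theorem largestPart_replacePart {m : ℕ} {P : n.Partition} {a b : ℕ} {ha : a ∈ P.parts}
    {hb : 0 < b} {h : n + b = m + a} (hmax : ∀ i ∈ P.parts, i ≤ b) :
    (P.replacePart a b ha hb h).largestPart = b :=
  largestPart_eq (Multiset.mem_cons_self _ _) fun _ hi =>
    (mem_replacePart_parts hi).elim le_of_eq (hmax _)

theorem parts_eq_replicate_of_forall_le_two {P : n.Partition} (h : ∀ i ∈ P.parts, i ≤ 2) :
    P.parts = Multiset.replicate (P.parts.count 2) 2 +
      Multiset.replicate (n - 2 * P.parts.count 2) 1 := by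
  have hsplit : P.parts = Multiset.replicate (P.parts.count 2) 2 +
      Multiset.replicate (P.parts.count 1) 1 := by
    ext i
    simp only [Multiset.count_add, Multiset.count_replicate]
    have : i ∈ P.parts → i = 1 ∨ i = 2 := fun hi => by
      have := P.parts_pos hi
      have := h i hi
      omega
    by_cases hi : i ∈ P.parts
    · grind
    · grind [Multiset.count_eq_zero]
  have hsum := P.parts_sum
  rw [hsplit] at hsum
  simp only [Multiset.sum_add, Multiset.sum_replicate, smul_eq_mul] at hsum
  rwa [show n - 2 * P.parts.count 2 = P.parts.count 1 by omega]

theorem card_restricted_le_two (n : ℕ) : #(restricted n (· ≤ 2)) = n / 2 + 1 := by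
  rw [← card_range (n / 2 + 1)]
  refine card_bij' (fun P _ => P.parts.count 2)
    (fun j hj => ⟨Multiset.replicate j 2 + Multiset.replicate (n - 2 * j) 1, ?_, ?_⟩) ?_ ?_ ?_ ?_
  · simp only [Multiset.mem_add, Multiset.mem_replicate]
    omega
  · simp only [mem_range] at hj
    simp only [Multiset.sum_add, Multiset.sum_replicate, smul_eq_mul]
    omega
  · intro P hP
    simp only [restricted, mem_filter, mem_univ, true_and] at hP
    have hsum := congrArg Multiset.sum (parts_eq_replicate_of_forall_le_two hP)
    simp only [Multiset.sum_add, Multiset.sum_replicate, smul_eq_mul, P.parts_sum] at hsum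
    simp only [mem_range]
    omega
  · intro j hj
    simp only [restricted, mem_filter, mem_univ, true_and, Multiset.mem_add,
      Multiset.mem_replicate]
    omega
  · intro P hP
    simp only [restricted, mem_filter, mem_univ, true_and] at hP
    exact Nat.Partition.ext (parts_eq_replicate_of_forall_le_two hP).symm
  · intro j hj
    simp [Multiset.count_replicate]

end Nat.Partition

open Nat.Partition

def boundedDiffPartitions (n t : ℕ) : Finset n.Partition :=
  {P | P.parts ≠ 0 ∧ ∀ a ∈ P.parts, ∀ b ∈ P.parts, a ≤ b + t}

section BoundedDiffPartitions

variable {n t : ℕ}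

theorem boundedDiffCount_eq_card (n t : ℕ) :
    boundedDiffCount n t = #(boundedDiffPartitions n t) := by
  rw [boundedDiffCount, Nat.card_eq_fintype_card, Fintype.card_subtype]
  rfl

theorem mem_boundedDiffPartitions {P : n.Partition} :
    P ∈ boundedDiffPartitions n t ↔
      P.parts ≠ 0 ∧ ∀ a ∈ P.parts, ∀ b ∈ P.parts, a ≤ b + t := by
  simp [boundedDiffPartitions]

theorem mem_boundedDiffPartitions_of_forall_mem_Icc {a : ℕ} {P : n.Partition}
    (hne : P.parts ≠ 0) (h : ∀ i ∈ P.parts, a ≤ i ∧ i ≤ a + t) :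
    P ∈ boundedDiffPartitions n t :=
  mem_boundedDiffPartitions.2 ⟨hne, fun i hi j hj => by grind⟩

theorem card_boundedDiffPartitions_one (t : ℕ) : #(boundedDiffPartitions 1 t) = 1 := by
  simp [boundedDiffPartitions]

theorem card_filter_not_forall_le_boundedDiffPartitions (n t : ℕ) :
    #{Q ∈ boundedDiffPartitions (n + t) t | ¬∀ i ∈ Q.parts, i ≤ t} =
      #(boundedDiffPartitions n t) := by
  symm
  have lt_largestPart {Q : (n + t).Partition} (hQ : ¬∀ i ∈ Q.parts, i ≤ t) :
      t < Q.largestPart := by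
    obtain ⟨i, hi, hti⟩ : ∃ i ∈ Q.parts, t < i := by simpa using hQ
    exact hti.trans_le (le_largestPart hi)
  refine card_bij'
    (fun P hP => P.replacePart P.smallestPart (P.smallestPart + t)
      (smallestPart_mem (mem_boundedDiffPartitions.1 hP).1)
      (by have := P.parts_pos (smallestPart_mem (mem_boundedDiffPartitions.1 hP).1); omega)
      (by omega))
    (fun Q hQ => Q.replacePart Q.largestPart (Q.largestPart - t)
      (largestPart_mem (mem_boundedDiffPartitions.1 (mem_filter.1 hQ).1).1)
      (by have := lt_largestPart (mem_filter.1 hQ).2; omega)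
      (by have := lt_largestPart (mem_filter.1 hQ).2; omega)) ?_ ?_ ?_ ?_
  · intro P hP
    obtain ⟨hne, hdiff⟩ := mem_boundedDiffPartitions.1 hP
    have ha := smallestPart_mem hne
    have := P.parts_pos ha
    refine mem_filter.2 ⟨mem_boundedDiffPartitions_of_forall_mem_Icc (a := P.smallestPart)
      (by simp) fun i hi => ?_, ?_⟩
    · rcases mem_replacePart_parts hi with rfl | hi
      · omega
      · exact ⟨smallestPart_le hi, hdiff i hi _ ha⟩
    · simp only [replacePart_parts, Multiset.mem_cons, forall_eq_or_imp, not_and]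
      omega
  · intro Q hQ
    obtain ⟨hQ, hlarge⟩ := mem_filter.1 hQ
    obtain ⟨hne, hdiff⟩ := mem_boundedDiffPartitions.1 hQ
    have hc := largestPart_mem hne
    have := lt_largestPart hlarge
    refine mem_boundedDiffPartitions_of_forall_mem_Icc (a := Q.largestPart - t) (by simp)
      fun i hi => ?_
    rcases mem_replacePart_parts hi with rfl | hi
    · omega
    · have := le_largestPart hi
      have := hdiff _ hc i hi
      omega
  · intro P hP
    obtain ⟨hne, hdiff⟩ := mem_boundedDiffPartitions.1 hP
    have ha := smallestPart_mem hne
    ext1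
    simp only [replacePart_parts]
    rw [largestPart_replacePart fun i hi => hdiff i hi _ ha]
    simp [Multiset.cons_erase ha]
  · intro Q hQ
    obtain ⟨hQ, hlarge⟩ := mem_filter.1 hQ
    obtain ⟨hne, hdiff⟩ := mem_boundedDiffPartitions.1 hQ
    have hc := largestPart_mem hne
    have := lt_largestPart hlarge
    ext1
    simp only [replacePart_parts]
    rw [smallestPart_replacePart fun i hi => by have := hdiff _ hc i hi; omega]
    simp [Nat.sub_add_cancel this.le, Multiset.cons_erase hc]

theorem filter_forall_le_boundedDiffPartitions (hn : n ≠ 0) :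
    {Q ∈ boundedDiffPartitions n t | ∀ i ∈ Q.parts, i ≤ t} = restricted n (· ≤ t) := by
  ext Q
  simp only [mem_filter, mem_boundedDiffPartitions, restricted, mem_univ, true_and,
    and_iff_right_iff_imp]
  intro h
  refine ⟨fun h0 => hn (by simpa [h0] using Q.parts_sum.symm), fun a ha b _ => ?_⟩
  have := h a ha
  omega

theorem card_boundedDiffPartitions_add (n t : ℕ) (h : n + t ≠ 0) :
    #(boundedDiffPartitions (n + t) t) =
      #(boundedDiffPartitions n t) + #(restricted (n + t) (· ≤ t)) := by
  rw [← card_filter_add_card_filter_not (fun Q : (n + t).Partition => ∀ i ∈ Q.parts, i ≤ t),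
    filter_forall_le_boundedDiffPartitions h, card_filter_not_forall_le_boundedDiffPartitions,
    add_comm]

end BoundedDiffPartitions

/-- `p(2k+1, 2) = C(k+2, 2)`. -/
theorem bounded_diff_two_odd (k : ℕ) :
    boundedDiffCount (2 * k + 1) 2 = (k + 2).choose 2 := by
  rw [boundedDiffCount_eq_card]
  induction k with
  | zero => exact card_boundedDiffPartitions_one 2
  | succ k ih =>
    have pascal : (k + 3).choose 2 = (k + 2).choose 2 + (k + 2) := by
      rw [Nat.choose_succ_succ' (k + 2) 1, Nat.choose_one_right, add_comm]
    rw [show 2 * (k + 1) + 1 = 2 * k + 1 + 2 by ring,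
      card_boundedDiffPartitions_add _ _ (by omega), ih, card_restricted_le_two, pascal]
    omega
end

section
/- Fix an integer t ≥ 1 and an integer k ≥ 1. Then ⋃_{m=1}^{k} C_m = { x ∈ ℝ^{t+1} : x_0 ≥ x_1 ≥ … ≥ x_{t−1} ≥ 0, ⟨u_0, x⟩ ≥ 0, and ⟨u_k, x⟩ < 0 }. -/
/-- The generator `v_i ∈ ℝ^{t+1}`: coordinates `0,…,(i-1) mod t` equal `1`, the remaining
coordinates among `0,…,t-1` equal `0`, and the last coordinate equals `((i-1) div t)·t`. -/
noncomputable def geneV (t : ℕ) (i : ℕ) : Fin (t + 1) → ℝ := fun l =>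
  if (l : ℕ) = t then (((i - 1) / t) * t : ℕ)
  else if (l : ℕ) ≤ (i - 1) % t then 1 else 0

/-- The half-open simplicial cone `C_m`, generated by `v_m, …, v_{m+t}` with the facet
opposite the first generator open. -/
noncomputable def coneC (t : ℕ) (m : ℕ) : Set (Fin (t + 1) → ℝ) :=
  { x | ∃ α : Fin (t + 1) → ℝ, 0 < α 0 ∧ (∀ i, 0 ≤ α i) ∧
      x = ∑ i : Fin (t + 1), α i • geneV t (m + (i : ℕ)) }

/-- The normal vector `u_l = -((l div t)+1)·t·e₀ + t·e_{l mod t} + e_t`. -/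
noncomputable def normalU (t : ℕ) (l : ℕ) : Fin (t + 1) → ℝ := fun j =>
  (if (j : ℕ) = 0 then -(((l / t + 1) * t : ℕ) : ℝ) else 0)
    + (if (j : ℕ) = l % t then (t : ℝ) else 0)
    + (if (j : ℕ) = t then 1 else 0)

/-- Standard inner product on `ℝ^{t+1}`. -/
noncomputable def sprod {n : ℕ} (u x : Fin n → ℝ) : ℝ := ∑ j, u j * x j

/-!
The generators `v_{M+1}, …, v_{M+1+t}` of `C_{M+1}` form a basis of `ℝ^{t+1}` whose dual basis
consists of `-u_{M+1}/t`, `u_M/t` and the differences `x_s - x_{s+1}` (with `x_t` read as `0`)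
for `s ≢ M (mod t)`, which rests on the identity `⟨u_l, v_{N+1}⟩ = t ⌊(N - l)/t⌋`. Hence
`C_{M+1}` is the set of `x` with `x_0 ≥ … ≥ x_{t-1} ≥ 0`, `⟨u_M, x⟩ ≥ 0` and `⟨u_{M+1}, x⟩ < 0`.
On that staircase region `⟨u_l, x⟩ = ⟨u_{l+1}, x⟩ + t (x_{l mod t} - x_{l mod t + 1})` decreases
in `l`, so `x` lies in some `C_m` with `1 ≤ m ≤ k` iff this sequence changes sign before `k`,
i.e. iff `⟨u_0, x⟩ ≥ 0 > ⟨u_k, x⟩`.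
-/

open Matrix

theorem Antitone.exists_le_and_succ_lt_iff {α : Type*} [LinearOrder α] {f : ℕ → α}
    (hf : Antitone f) {a : α} {k : ℕ} :
    (∃ M < k, a ≤ f M ∧ f (M + 1) < a) ↔ a ≤ f 0 ∧ f k < a := by
  constructor
  · rintro ⟨M, hMk, hM, hM1⟩
    exact ⟨hM.trans (hf M.zero_le), (hf hMk).trans_lt hM1⟩
  · rintro ⟨h0, hk⟩
    have hex : ∃ n, f n < a := ⟨k, hk⟩
    obtain ⟨M, hM⟩ : ∃ M, Nat.find hex = M + 1 :=
      Nat.exists_eq_add_one.2 (Nat.pos_of_ne_zero fun h => (h ▸ Nat.find_spec hex).not_ge h0)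
    refine ⟨M, ?_, not_lt.1 (Nat.find_min hex (by omega)), hM ▸ Nat.find_spec hex⟩
    have := Nat.find_min' hex hk
    omega

lemma sprod_eq_dotProduct {n : ℕ} (u x : Fin n → ℝ) : sprod u x = u ⬝ᵥ x := rfl

section Staircase

variable {t : ℕ}

def truncSeq (t : ℕ) (x : Fin (t + 1) → ℝ) (j : ℕ) : ℝ :=
  if h : j < t then x ⟨j, by omega⟩ else 0

def coordVec (t j : ℕ) : Fin (t + 1) → ℝ := fun i => if (i : ℕ) = j ∧ j < t then 1 else 0

def diffVec (t s : ℕ) : Fin (t + 1) → ℝ := coordVec t s - coordVec t (s + 1)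

lemma sprod_coordVec (j : ℕ) (x : Fin (t + 1) → ℝ) :
    sprod (coordVec t j) x = truncSeq t x j := by
  unfold truncSeq
  split_ifs with hj
  · rw [sprod, Finset.sum_eq_single ⟨j, by omega⟩]
    · simp [coordVec, hj]
    · intro i _ hi
      simp [coordVec, Fin.ext_iff.not.mp hi]
    · simp
  · simp [sprod, coordVec, hj]

lemma sprod_diffVec (s : ℕ) (x : Fin (t + 1) → ℝ) :
    sprod (diffVec t s) x = truncSeq t x s - truncSeq t x (s + 1) := by
  rw [diffVec, sprod_eq_dotProduct, sub_dotProduct, ← sprod_eq_dotProduct, ← sprod_eq_dotProduct,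
    sprod_coordVec, sprod_coordVec]

lemma chain_and_nonneg_iff (x : Fin (t + 1) → ℝ) :
    ((∀ i j : Fin (t + 1), i ≤ j → (j : ℕ) < t → x j ≤ x i) ∧
      (∀ i : Fin (t + 1), (i : ℕ) < t → 0 ≤ x i)) ↔
    ∀ s < t, 0 ≤ sprod (diffVec t s) x := by
  simp only [sprod_diffVec, sub_nonneg]
  constructor
  · rintro ⟨hchain, hnonneg⟩ s hs
    by_cases hs1 : s + 1 < t
    · simpa [truncSeq, hs, hs1] using hchain ⟨s, by omega⟩ ⟨s + 1, by omega⟩ (by simp) hs1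
    · simpa [truncSeq, hs, hs1] using hnonneg ⟨s, by omega⟩ hs
  · intro hdiff
    have hanti : Antitone (truncSeq t x) := by
      refine antitone_nat_of_succ_le fun s => ?_
      by_cases hs : s < t
      · exact hdiff s hs
      · simp [truncSeq, hs, show ¬ s + 1 < t by omega]
    refine ⟨fun i j hij hj => ?_, fun i hi => ?_⟩
    · have hi : (i : ℕ) < t := (Fin.le_def.mp hij).trans_lt hj
      simpa [truncSeq, hj, hi] using hanti (Fin.le_def.mp hij)
    · simpa [truncSeq, hi] using hanti (show (i : ℕ) ≤ t by omega)

end Staircase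

section Pairings

variable {t : ℕ}

lemma normalU_eq (ht : 0 < t) (l : ℕ) :
    normalU t l = (t : ℝ) • coordVec t (l % t) + Pi.single (Fin.last t) 1
      - (((l / t + 1) * t : ℕ) : ℝ) • coordVec t 0 := by
  have hl := Nat.mod_lt l ht
  funext j
  have hj := j.isLt
  simp only [normalU, coordVec, Pi.add_apply, Pi.sub_apply, Pi.smul_apply, Pi.single_apply,
    Fin.ext_iff, Fin.val_last, smul_eq_mul]
  split_ifs <;> first | (exfalso; omega) | (push_cast; ring)

lemma sprod_normalU (ht : 0 < t) (l : ℕ) (x : Fin (t + 1) → ℝ) :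
    sprod (normalU t l) x = t * truncSeq t x (l % t) + x (Fin.last t)
      - ((l / t + 1) * t : ℕ) * truncSeq t x 0 := by
  rw [sprod_eq_dotProduct, normalU_eq ht, sub_dotProduct, add_dotProduct, smul_dotProduct,
    smul_dotProduct, single_dotProduct, ← sprod_eq_dotProduct, ← sprod_eq_dotProduct,
    sprod_coordVec, sprod_coordVec, one_mul, smul_eq_mul, smul_eq_mul]

lemma sprod_normalU_eq_succ_add (ht : 0 < t) (l : ℕ) (x : Fin (t + 1) → ℝ) :
    sprod (normalU t l) x = sprod (normalU t (l + 1)) x + t * sprod (diffVec t (l % t)) x := by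
  rw [sprod_normalU ht, sprod_normalU ht, sprod_diffVec]
  have hl := Nat.div_add_mod l t
  have hlt := Nat.mod_lt l ht
  by_cases hwrap : l % t + 1 < t
  · have hsucc : l % t + 1 + t * (l / t) = l + 1 := by omega
    obtain ⟨hdiv, hmod⟩ := (Nat.div_mod_unique ht).2 ⟨hsucc, hwrap⟩
    rw [hdiv, hmod]
    ring
  · have hlast : l % t + 1 = t := by omega
    have hsucc : 0 + t * (l / t + 1) = l + 1 := by rw [Nat.mul_add_one]; omega
    obtain ⟨hdiv, hmod⟩ := (Nat.div_mod_unique ht).2 ⟨hsucc, ht⟩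
    rw [hdiv, hmod, hlast]
    simp only [truncSeq, lt_irrefl, dif_neg, not_false_eq_true]
    push_cast
    ring

lemma truncSeq_geneV (ht : 0 < t) (N j : ℕ) :
    truncSeq t (geneV t (N + 1)) j = if j ≤ N % t then 1 else 0 := by
  have hN := Nat.mod_lt N ht
  unfold truncSeq geneV
  by_cases hj : j < t
  · simp [hj, Nat.ne_of_lt hj]
  · simp [hj, show ¬ j ≤ N % t by omega]

lemma geneV_last (N : ℕ) : geneV t (N + 1) (Fin.last t) = (N / t * t : ℕ) := by
  simp [geneV]

lemma sprod_diffVec_geneV (ht : 0 < t) (s N : ℕ) :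
    sprod (diffVec t s) (geneV t (N + 1)) = if s = N % t then 1 else 0 := by
  rw [sprod_diffVec, truncSeq_geneV ht, truncSeq_geneV ht]
  split_ifs <;> first | (exfalso; omega) | norm_num

lemma natCast_sub_natCast_ediv (ht : 0 < t) (N l : ℕ) :
    ((N : ℤ) - l) / t = ((N / t : ℕ) : ℤ) - ((l / t : ℕ) + 1) + if l % t ≤ N % t then 1 else 0 := by
  rw [Int.ediv_eq_iff_of_pos (by exact_mod_cast ht)]
  have hN : (t : ℤ) * (N / t : ℕ) + (N % t : ℕ) = N := by exact_mod_cast Nat.div_add_mod N t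
  have hl : (t : ℤ) * (l / t : ℕ) + (l % t : ℕ) = l := by exact_mod_cast Nat.div_add_mod l t
  have hNt : ((N % t : ℕ) : ℤ) < t := by exact_mod_cast Nat.mod_lt N ht
  have hlt : ((l % t : ℕ) : ℤ) < t := by exact_mod_cast Nat.mod_lt l ht
  split_ifs with h
  · have h' : ((l % t : ℕ) : ℤ) ≤ (N % t : ℕ) := by exact_mod_cast h
    constructor <;> linarith
  · have h' : ((N % t : ℕ) : ℤ) < (l % t : ℕ) := by exact_mod_cast not_le.mp h
    constructor <;> linarith

-- `/` on `ℤ` rounds down for the positive divisor `t`, so this is `t * ⌊(N - l) / t⌋`.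
lemma sprod_normalU_geneV (ht : 0 < t) (l N : ℕ) :
    sprod (normalU t l) (geneV t (N + 1)) = t * ((((N : ℤ) - l) / t : ℤ) : ℝ) := by
  rw [sprod_normalU ht, truncSeq_geneV ht, truncSeq_geneV ht, geneV_last,
    natCast_sub_natCast_ediv ht]
  simp only [Int.cast_add, Int.cast_sub, Int.cast_natCast, Int.cast_one, Int.cast_ite,
    Int.cast_zero, Nat.cast_mul, Nat.cast_add, Nat.cast_one, Nat.zero_le, if_true]
  split_ifs <;> ring

end Pairings

theorem Matrix.eq_vecMul_iff_eq_mulVec_of_mul_transpose_eq_one {n R : Type*} [Fintype n]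
    [DecidableEq n] [CommRing R] {G F : Matrix n n R} (h : G * Fᵀ = 1) (x α : n → R) :
    x = α ᵥ* G ↔ α = F *ᵥ x := by
  constructor
  · rintro rfl
    rw [← vecMul_transpose, vecMul_vecMul, h, vecMul_one]
  · rintro rfl
    rw [← vecMul_transpose, vecMul_vecMul, mul_eq_one_comm.mp h, vecMul_one]

lemma sprod_smul {n : ℕ} (c : ℝ) (u x : Fin n → ℝ) : sprod (c • u) x = c * sprod u x := by
  rw [sprod_eq_dotProduct, smul_dotProduct, smul_eq_mul, sprod_eq_dotProduct]

lemma sprod_vecMul {n : ℕ} (u α : Fin n → ℝ) (G : Matrix (Fin n) (Fin n) ℝ) :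
    sprod u (α ᵥ* G) = ∑ i, α i * sprod u (G i) := by
  simp only [sprod_eq_dotProduct, vecMul_eq_sum, dotProduct_sum, dotProduct_smul, smul_eq_mul]

section Cone

variable {t : ℕ}

noncomputable def coneGen (t M : ℕ) : Matrix (Fin (t + 1)) (Fin (t + 1)) ℝ :=
  fun n => geneV t (M + 1 + n)

noncomputable def coneDual (t M : ℕ) : Matrix (Fin (t + 1)) (Fin (t + 1)) ℝ :=
  fun n =>
    if (n : ℕ) = 0 then -(t : ℝ)⁻¹ • normalU t (M + 1)
    else if (n : ℕ) = t then (t : ℝ)⁻¹ • normalU t M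
    else diffVec t ((M + n) % t)

lemma coneDual_zero (M : ℕ) : coneDual t M 0 = -(t : ℝ)⁻¹ • normalU t (M + 1) := by
  simp only [coneDual, Fin.val_zero, if_true]

lemma coneDual_last (ht : 0 < t) (M : ℕ) :
    coneDual t M (Fin.last t) = (t : ℝ)⁻¹ • normalU t M := by
  simp only [coneDual, Fin.val_last, ht.ne', if_false, if_true]

lemma coneDual_of_ne (M : ℕ) {n : Fin (t + 1)} (h0 : (n : ℕ) ≠ 0) (hlast : (n : ℕ) ≠ t) :
    coneDual t M n = diffVec t ((M + n) % t) := by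
  simp only [coneDual, h0, hlast, if_false]

lemma coneGen_mul_transpose_coneDual (ht : 0 < t) (M : ℕ) :
    coneGen t M * (coneDual t M)ᵀ = 1 := by
  have htZ : (0 : ℤ) < t := by exact_mod_cast ht
  have htR : (t : ℝ) ≠ 0 := by exact_mod_cast ht.ne'
  ext i j
  have hi := i.isLt
  have hentry : (coneGen t M * (coneDual t M)ᵀ) i j
      = sprod (coneDual t M j) (geneV t ((M + i) + 1)) := by
    rw [sprod_eq_dotProduct, dotProduct_comm, add_right_comm]
    rfl
  rw [hentry, one_apply]
  by_cases hj0 : (j : ℕ) = 0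
  · have hq : (((M + i : ℕ) : ℤ) - (M + 1 : ℕ)) / t = if (i : ℕ) = 0 then -1 else 0 := by
      rw [Int.ediv_eq_iff_of_pos htZ]
      split_ifs <;> push_cast <;> constructor <;> omega
    rw [show j = 0 from Fin.ext hj0, coneDual_zero, sprod_smul, sprod_normalU_geneV ht, hq]
    simp only [Fin.ext_iff, Fin.val_zero]
    split_ifs <;> simp [htR]
  by_cases hjt : (j : ℕ) = t
  · have hq : (((M + i : ℕ) : ℤ) - M) / t = if (i : ℕ) = t then 1 else 0 := by
      rw [Int.ediv_eq_iff_of_pos htZ]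
      split_ifs <;> push_cast <;> constructor <;> omega
    rw [show j = Fin.last t from Fin.ext hjt, coneDual_last ht, sprod_smul,
      sprod_normalU_geneV ht, hq]
    simp only [Fin.ext_iff, Fin.val_last]
    split_ifs <;> simp [htR]
  · have hmod : (M + j) % t = (M + i) % t ↔ (i : ℕ) = j := by
      refine ⟨fun h => ?_, fun h => by rw [h]⟩
      have hji : (j : ℕ) % t = (i : ℕ) % t := Nat.ModEq.add_left_cancel' M h
      rw [Nat.mod_eq_of_lt (by omega : (j : ℕ) < t)] at hji
      by_cases hit : (i : ℕ) = t
      · rw [hit, Nat.mod_self] at hji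
        omega
      · rw [Nat.mod_eq_of_lt (by omega : (i : ℕ) < t)] at hji
        omega
    rw [coneDual_of_ne M hj0 hjt, sprod_diffVec_geneV ht]
    simp only [hmod, Fin.ext_iff]

lemma mem_coneC_succ_iff (ht : 0 < t) (M : ℕ) (x : Fin (t + 1) → ℝ) :
    x ∈ coneC t (M + 1) ↔
      (∀ s < t, 0 ≤ sprod (diffVec t s) x) ∧ 0 ≤ sprod (normalU t M) x ∧
        sprod (normalU t (M + 1)) x < 0 := by
  have htinv : 0 < (t : ℝ)⁻¹ := by positivity
  have hbasis := Matrix.eq_vecMul_iff_eq_mulVec_of_mul_transpose_eq_one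
    (coneGen_mul_transpose_coneDual ht M) x
  have hgen : ∀ α : Fin (t + 1) → ℝ, ∑ i, α i • geneV t (M + 1 + i) = α ᵥ* coneGen t M := by
    intro α
    rw [vecMul_eq_sum]
    rfl
  have hcoeff : ∀ n, (coneDual t M *ᵥ x) n = sprod (coneDual t M n) x := fun n => rfl
  simp only [coneC, Set.mem_ofPred_eq, hgen]
  constructor
  · rintro ⟨α, hα0, hα, hx⟩
    obtain rfl := (hbasis α).1 hx
    refine ⟨fun s hs => ?_, ?_, ?_⟩
    · rw [hx, sprod_vecMul]
      refine Finset.sum_nonneg fun i _ => mul_nonneg (hα i) ?_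
      rw [coneGen, add_right_comm, sprod_diffVec_geneV ht]
      split_ifs <;> norm_num
    · have := hα (Fin.last t)
      rw [hcoeff, coneDual_last ht, sprod_smul] at this
      exact nonneg_of_mul_nonneg_right this htinv
    · rw [hcoeff, coneDual_zero, sprod_smul, neg_mul, neg_pos] at hα0
      exact neg_of_mul_neg_right hα0 htinv.le
  · rintro ⟨hdiff, hM, hM1⟩
    have hα0 : 0 < (coneDual t M *ᵥ x) 0 := by
      rw [hcoeff, coneDual_zero, sprod_smul, neg_mul, neg_pos]
      exact mul_neg_of_pos_of_neg htinv hM1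
    refine ⟨coneDual t M *ᵥ x, hα0, fun n => ?_, (hbasis _).2 rfl⟩
    by_cases hn0 : (n : ℕ) = 0
    · rw [show n = 0 from Fin.ext hn0]
      exact hα0.le
    by_cases hnt : (n : ℕ) = t
    · rw [show n = Fin.last t from Fin.ext hnt, hcoeff, coneDual_last ht, sprod_smul]
      exact mul_nonneg htinv.le hM
    · rw [hcoeff, coneDual_of_ne M hn0 hnt]
      exact hdiff _ (Nat.mod_lt _ ht)

lemma antitone_sprod_normalU (ht : 0 < t) {x : Fin (t + 1) → ℝ}
    (hx : ∀ s < t, 0 ≤ sprod (diffVec t s) x) : Antitone fun l => sprod (normalU t l) x :=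
  antitone_nat_of_succ_le fun l => by
    rw [sprod_normalU_eq_succ_add ht l x]
    exact le_add_of_nonneg_right (mul_nonneg t.cast_nonneg (hx _ (Nat.mod_lt l ht)))

end Cone

theorem union_of_cones_up_to_k_general (t : ℕ) (ht : 1 ≤ t) (k : ℕ) :
    (⋃ m ∈ Finset.Icc 1 k, coneC t m)
      = { x : Fin (t + 1) → ℝ |
          (∀ i j : Fin (t + 1), i ≤ j → (j : ℕ) < t → x j ≤ x i) ∧
          (∀ i : Fin (t + 1), (i : ℕ) < t → 0 ≤ x i) ∧
          0 ≤ sprod (normalU t 0) x ∧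
          sprod (normalU t k) x < 0 } := by
  ext x
  rw [Set.mem_ofPred_eq, ← and_assoc, chain_and_nonneg_iff]
  simp only [Set.mem_iUnion, Finset.mem_Icc, exists_prop]
  constructor
  · rintro ⟨_, ⟨hm, hmk⟩, hx⟩
    obtain ⟨M, rfl⟩ := Nat.exists_eq_add_of_le' hm
    obtain ⟨hdiff, hM, hM1⟩ := (mem_coneC_succ_iff ht M x).1 hx
    exact ⟨hdiff, (antitone_sprod_normalU ht hdiff).exists_le_and_succ_lt_iff.1 ⟨M, hmk, hM, hM1⟩⟩
  · rintro ⟨hdiff, hcross⟩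
    obtain ⟨M, hMk, hM, hM1⟩ := (antitone_sprod_normalU ht hdiff).exists_le_and_succ_lt_iff.2 hcross
    exact ⟨M + 1, ⟨M.succ_pos, hMk⟩, (mem_coneC_succ_iff ht M x).2 ⟨hdiff, hM, hM1⟩⟩

/-- For every `k ≥ 1`,
`⋃_{m=1}^k C_m = {x : x₀ ≥ … ≥ x_{t-1} ≥ 0, ⟨u₀,x⟩ ≥ 0, ⟨u_k,x⟩ < 0}`. -/
theorem union_of_cones_up_to_k (t : ℕ) (ht : 1 ≤ t) (k : ℕ) (hk : 1 ≤ k) :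
    (⋃ m ∈ Finset.Icc 1 k, coneC t m)
      = { x : Fin (t + 1) → ℝ |
          (∀ i j : Fin (t + 1), i ≤ j → (j : ℕ) < t → x j ≤ x i) ∧
          (∀ i : Fin (t + 1), (i : ℕ) < t → 0 ≤ x i) ∧
          0 ≤ sprod (normalU t 0) x ∧
          sprod (normalU t k) x < 0 } :=
  union_of_cones_up_to_k_general t ht k
end
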